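/- arXiv:2504.02501 — 3 statements merged into one kernel-verified Lean document; each statement's English description precedes it below -/
import Mathlib

section
/- Let Q be a ℂ[[s]]-submodule of ℂ[∂_s] under the star operation. If Q is finitely generated over ℂ[[s]], say by q_1,...,q_m, then Q^⊥ = { p ∈ ℂ[[s]] | p ⋆ q_j = 0 for all j } is an Artinian ideal of ℂ[[s]] generated by finitely many polynomials; moreover Q^⊥ contains every monomial s^α with |α| > max_j deg(q_j). -/
/-!
The pairing is nondegenerate (it is diagonal in the monomial bases, with weights `α! ≠ 0`) and
the star action is adjoint to multiplication: `(m ⋆ q, p) = (q, m p)`. Hence `p ∈ Q^⊥` iff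
`(q_j, p r) = 0` for all `r` and `j`, iff `p ⋆ q_j = 0` for all `j`, and this set is an ideal `I`.
A series of order `> d = max_j deg q_j` stars every `q_j` to zero, so `I` contains all of them.
Therefore `ℂ[[s]]/I` is spanned by the monomials of degree `≤ d`, and truncating a finite
generating set of `I` (`ℂ[[s]]` is Noetherian) at degree `d`, together with the monomials of
degree `d + 1`, gives polynomial generators.
-/

noncomputable section
open MvPolynomial

/-- multi-factorial α! = ∏ αᵢ! -/
def mfact {σ : Type*} [Fintype σ] (α : σ →₀ ℕ) : ℕ := ∏ i, (α i).factorial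

/-- the pairing (q,p) = (q(∂ₛ) • p)|₍ₛ₌₀₎ = ∑_α q_α · α! · p_α -/
def pairing {h : ℕ} (q : MvPolynomial (Fin h) ℂ) (p : MvPowerSeries (Fin h) ℂ) : ℂ :=
  ∑ α ∈ q.support, q.coeff α * (mfact α : ℂ) * MvPowerSeries.coeff α p

/-- the star operation m ⋆ q = ∑_α m_α ∑_β q_β (β!/(β-α)!) ∂^(β-α) -/
def starOp {h : ℕ} (m : MvPowerSeries (Fin h) ℂ) (q : MvPolynomial (Fin h) ℂ) :
    MvPolynomial (Fin h) ℂ :=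
  ∑ β ∈ q.support, ∑ α ∈ Finset.Iic β,
    MvPolynomial.monomial (β - α)
      (q.coeff β * MvPowerSeries.coeff α m * ((mfact β : ℂ) / (mfact (β - α) : ℂ)))

/-- P^⊥ for a set of power series -/
def perpOfPS {h : ℕ} (P : Set (MvPowerSeries (Fin h) ℂ)) : Set (MvPolynomial (Fin h) ℂ) :=
  {q | ∀ p ∈ P, pairing q p = 0}

/-- Q^⊥ for a set of polynomials -/
def perpOfPoly {h : ℕ} (Q : Set (MvPolynomial (Fin h) ℂ)) : Set (MvPowerSeries (Fin h) ℂ) :=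
  {p | ∀ q ∈ Q, pairing q p = 0}

theorem Finset.sum_antidiagonal_eq_sum_Iic {σ M : Type*} [DecidableEq σ] [AddCommMonoid M]
    (β : σ →₀ ℕ) (f : (σ →₀ ℕ) → (σ →₀ ℕ) → M) :
    ∑ x ∈ antidiagonal β, f x.1 x.2 = ∑ α ∈ Iic β, f α (β - α) := by
  refine sum_nbij' Prod.fst (fun α => (α, β - α)) ?_ ?_ ?_ (fun _ _ => rfl) ?_
  · rintro ⟨a, b⟩ hab
    simp_all [← HasAntidiagonal.mem_antidiagonal.mp hab]
  · intro a ha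
    simp_all [HasAntidiagonal.mem_antidiagonal]
  · rintro ⟨a, b⟩ hab
    simp_all [← HasAntidiagonal.mem_antidiagonal.mp hab]
  · rintro ⟨a, b⟩ hab
    simp [← HasAntidiagonal.mem_antidiagonal.mp hab]

namespace MvPowerSeries

open Finsupp

variable {σ R : Type*} [CommRing R] {n : ℕ}

theorem le_order_sub_truncTotal [Finite σ] (p : MvPowerSeries σ R) :
    n ≤ (p - truncTotal n p).order :=
  nat_le_order fun β hβ => by rw [map_sub, MvPolynomial.coeff_coe, coeff_truncTotal _ hβ, sub_self]

theorem le_order_monomial (μ : σ →₀ ℕ) (r : R) : ((degree μ : ℕ) : ℕ∞) ≤ (monomial μ r).order := by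
  classical
  refine nat_le_order fun β hβ => ?_
  rw [coeff_monomial, if_neg]
  rintro rfl
  exact hβ.false

theorem mem_span_monomial_of_le_order [Finite σ] {p : MvPowerSeries σ R} (hp : n ≤ p.order) :
    p ∈ Ideal.span ((monomial · (1 : R)) '' {μ | degree μ = n}) := by
  classical
  choose! pick pick_le degree_pick using fun α (hα : n ≤ degree α) => exists_le_degree_eq α n hα
  let S := (finite_of_degree_eq (σ := σ) n).toFinset
  -- `r μ` collects the terms `c_α s^α` of `p` with `pick α = μ`, divided by `s^μ`.
  let r : (σ →₀ ℕ) → MvPowerSeries σ R := fun μ γ =>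
    if n ≤ degree (γ + μ) ∧ pick (γ + μ) = μ then coeff (γ + μ) p else 0
  have coeff_r (μ γ) : coeff γ (r μ) =
      if n ≤ degree (γ + μ) ∧ pick (γ + μ) = μ then coeff (γ + μ) p else 0 := rfl
  have hr : p = ∑ μ ∈ S, monomial μ 1 * r μ := by
    ext α
    simp only [map_sum, coeff_monomial_mul, one_mul]
    by_cases hα : n ≤ degree α
    · rw [Finset.sum_eq_single (pick α)]
      · rw [if_pos (pick_le α hα), coeff_r, tsub_add_cancel_of_le (pick_le α hα), if_pos ⟨hα, rfl⟩]
      · intro μ _ hμ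
        split_ifs with hle
        · rw [coeff_r, tsub_add_cancel_of_le hle, if_neg fun h => hμ h.2.symm]
        · rfl
      · exact fun h => (h ((Set.Finite.mem_toFinset _).mpr (degree_pick α hα))).elim
    · rw [coeff_of_lt_order (lt_of_lt_of_le (by exact_mod_cast not_le.mp hα) hp)]
      refine (Finset.sum_eq_zero fun μ hμ => if_neg fun hle => hα ?_).symm
      exact ((Set.Finite.mem_toFinset _).mp hμ).symm.trans_le (degree_mono hle)
  rw [hr]
  exact Ideal.sum_mem _ fun μ hμ =>
    Ideal.mul_mem_right _ _ (Ideal.subset_span ⟨μ, (Set.Finite.mem_toFinset _).mp hμ, rfl⟩)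

variable [Finite σ] {I : Ideal (MvPowerSeries σ R)}

theorem exists_finite_span_coe_of_le_order [IsNoetherianRing R]
    (hI : ∀ p : MvPowerSeries σ R, n ≤ p.order → p ∈ I) :
    ∃ S : Set (MvPolynomial σ R), S.Finite ∧ I = Ideal.span ((↑) '' S) := by
  obtain ⟨G, hG⟩ := IsNoetherian.noetherian I
  let monomials := (MvPolynomial.monomial · (1 : R)) '' {μ : σ →₀ ℕ | degree μ = n}
  refine ⟨truncTotal n '' G ∪ monomials, (G.finite_toSet.image _).union
    ((finite_of_degree_eq n).image _), le_antisymm ?_ ?_⟩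
  · have h_monomials : (monomial · (1 : R)) '' {μ | degree μ = n} ⊆
        ((↑) : MvPolynomial σ R → MvPowerSeries σ R) '' (truncTotal n '' G ∪ monomials) := by
      rintro _ ⟨μ, hμ, rfl⟩
      exact ⟨_, Or.inr ⟨μ, hμ, rfl⟩, MvPolynomial.coe_monomial μ 1⟩
    rw [← hG, Ideal.span_le]
    intro g hg
    rw [← add_sub_cancel (truncTotal n g : MvPowerSeries σ R) g]
    exact add_mem (Ideal.subset_span ⟨_, Or.inl ⟨g, hg, rfl⟩, rfl⟩)
      (Ideal.span_mono h_monomials (mem_span_monomial_of_le_order (le_order_sub_truncTotal g)))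
  · rw [Ideal.span_le]
    rintro _ ⟨_, ⟨g, hg, rfl⟩ | ⟨μ, hμ, rfl⟩, rfl⟩
    · rw [← sub_sub_cancel g (truncTotal n g : MvPowerSeries σ R)]
      exact sub_mem (hG ▸ Ideal.subset_span hg) (hI _ (le_order_sub_truncTotal g))
    · rw [MvPolynomial.coe_monomial]
      exact hI _ (hμ ▸ le_order_monomial μ 1)

theorem finite_quotient_of_le_order (hI : ∀ p : MvPowerSeries σ R, n ≤ p.order → p ∈ I) :
    Module.Finite R (MvPowerSeries σ R ⧸ I) := by
  classical
  let S := (finite_of_degree_lt (σ := σ) n).toFinset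
  refine ⟨⟨S.image fun μ => Ideal.Quotient.mk I (monomial μ 1), eq_top_iff.mpr ?_⟩⟩
  rintro x -
  obtain ⟨p, rfl⟩ := Ideal.Quotient.mk_surjective x
  have h_trunc : Ideal.Quotient.mk I p = Ideal.Quotient.mk I (truncTotal n p) :=
    (Ideal.Quotient.mk_eq_mk_iff_sub_mem _ _).mpr (hI _ (le_order_sub_truncTotal p))
  rw [h_trunc, truncTotal, truncFinset_apply,
    ← MvPolynomial.coeToMvPowerSeries.ringHom_apply, map_sum, map_sum]
  refine Submodule.sum_mem _ fun μ hμ => ?_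
  rw [MvPolynomial.coeToMvPowerSeries.ringHom_apply, MvPolynomial.coe_monomial,
    ← mul_one (coeff μ p), ← smul_eq_mul, map_smul, ← Ideal.Quotient.mkₐ_eq_mk R, map_smul]
  exact Submodule.smul_mem _ _ (Submodule.subset_span (Finset.mem_image_of_mem _ hμ))

end MvPowerSeries

theorem mfact_ne_zero {σ : Type*} [Fintype σ] (α : σ →₀ ℕ) : (mfact α : ℂ) ≠ 0 :=
  Nat.cast_ne_zero.mpr <| Finset.prod_ne_zero_iff.mpr fun _ _ => Nat.factorial_ne_zero _

section StarPairing

variable {h : ℕ}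

theorem pairing_eq_sum_of_support_subset {q : MvPolynomial (Fin h) ℂ} {S : Finset (Fin h →₀ ℕ)}
    (hS : q.support ⊆ S) (p : MvPowerSeries (Fin h) ℂ) :
    pairing q p = ∑ α ∈ S, q.coeff α * mfact α * MvPowerSeries.coeff α p :=
  Finset.sum_subset hS fun α _ hα => by rw [notMem_support_iff.mp hα, zero_mul, zero_mul]

theorem pairing_add_left (q₁ q₂ : MvPolynomial (Fin h) ℂ) (p : MvPowerSeries (Fin h) ℂ) :
    pairing (q₁ + q₂) p = pairing q₁ p + pairing q₂ p := by
  classical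
  rw [pairing_eq_sum_of_support_subset support_add,
    pairing_eq_sum_of_support_subset Finset.subset_union_left,
    pairing_eq_sum_of_support_subset Finset.subset_union_right, ← Finset.sum_add_distrib]
  simp only [coeff_add, add_mul]

theorem pairing_sum_left {ι : Type*} (s : Finset ι) (q : ι → MvPolynomial (Fin h) ℂ)
    (p : MvPowerSeries (Fin h) ℂ) : pairing (∑ i ∈ s, q i) p = ∑ i ∈ s, pairing (q i) p :=
  map_sum (AddMonoidHom.mk' (pairing · p) (pairing_add_left · · p)) q s

theorem pairing_monomial_left (γ : Fin h →₀ ℕ) (c : ℂ) (p : MvPowerSeries (Fin h) ℂ) :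
    pairing (monomial γ c) p = c * mfact γ * MvPowerSeries.coeff γ p := by
  rw [pairing_eq_sum_of_support_subset (support_monomial_subset), Finset.sum_singleton,
    coeff_monomial, if_pos rfl]

theorem pairing_monomial_right (q : MvPolynomial (Fin h) ℂ) (γ : Fin h →₀ ℕ) :
    pairing q (MvPowerSeries.monomial γ 1) = q.coeff γ * mfact γ := by
  classical
  rw [pairing_eq_sum_of_support_subset (Finset.subset_union_left (s₂ := {γ})),
    Finset.sum_eq_single_of_mem γ (by simp), MvPowerSeries.coeff_monomial_same, mul_one]
  intro α _ hα
  rw [MvPowerSeries.coeff_monomial, if_neg hα, mul_zero]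

theorem ext_pairing_monomial_right {q₁ q₂ : MvPolynomial (Fin h) ℂ}
    (H : ∀ γ, pairing q₁ (MvPowerSeries.monomial γ 1) = pairing q₂ (MvPowerSeries.monomial γ 1)) :
    q₁ = q₂ := by
  ext γ
  simpa only [pairing_monomial_right, mul_left_inj' (mfact_ne_zero γ)] using H γ

theorem pairing_starOp (m p : MvPowerSeries (Fin h) ℂ) (q : MvPolynomial (Fin h) ℂ) :
    pairing (starOp m q) p = pairing q (m * p) := by
  classical
  simp only [starOp, pairing_sum_left, pairing_monomial_left]
  refine Finset.sum_congr rfl fun β _ => ?_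
  rw [MvPowerSeries.coeff_mul, Finset.sum_antidiagonal_eq_sum_Iic β
    fun a b => MvPowerSeries.coeff a m * MvPowerSeries.coeff b p, Finset.mul_sum]
  refine Finset.sum_congr rfl fun α _ => ?_
  have := mfact_ne_zero (β - α)
  field_simp

theorem pairing_zero_left (p : MvPowerSeries (Fin h) ℂ) : pairing 0 p = 0 := by
  simp [pairing]

theorem pairing_add_right (q : MvPolynomial (Fin h) ℂ) (p₁ p₂ : MvPowerSeries (Fin h) ℂ) :
    pairing q (p₁ + p₂) = pairing q p₁ + pairing q p₂ := by
  simp only [pairing, map_add, mul_add, Finset.sum_add_distrib]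

theorem starOp_zero_left (q : MvPolynomial (Fin h) ℂ) : starOp 0 q = 0 := by
  simp [starOp]

theorem starOp_eq_zero_iff {p : MvPowerSeries (Fin h) ℂ} {q : MvPolynomial (Fin h) ℂ} :
    starOp p q = 0 ↔ ∀ r, pairing q (p * r) = 0 := by
  refine ⟨fun hp r => by rw [← pairing_starOp, hp, pairing_zero_left], fun hp => ?_⟩
  refine ext_pairing_monomial_right fun γ => ?_
  rw [pairing_starOp, hp, pairing_zero_left]

theorem starOp_eq_zero_of_totalDegree_lt_order {p : MvPowerSeries (Fin h) ℂ}
    {q : MvPolynomial (Fin h) ℂ} (hpq : q.totalDegree < p.order) : starOp p q = 0 := by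
  refine Finset.sum_eq_zero fun β hβ => Finset.sum_eq_zero fun α hα => ?_
  have hα_deg : ((Finsupp.degree α : ℕ) : ℕ∞) < p.order := by
    refine lt_of_le_of_lt ?_ hpq
    exact_mod_cast (Finsupp.degree_mono (Finset.mem_Iic.mp hα)).trans (le_totalDegree hβ)
  rw [MvPowerSeries.coeff_of_lt_order hα_deg, mul_zero, zero_mul, map_zero]

def starAnnihilator {ι : Type*} (qs : ι → MvPolynomial (Fin h) ℂ) :
    Ideal (MvPowerSeries (Fin h) ℂ) where
  carrier := {p | ∀ j, starOp p (qs j) = 0}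
  zero_mem' j := starOp_zero_left _
  add_mem' {p₁ p₂} hp₁ hp₂ j := starOp_eq_zero_iff.mpr fun r => by
    rw [add_mul, pairing_add_right, starOp_eq_zero_iff.mp (hp₁ j), starOp_eq_zero_iff.mp (hp₂ j),
      add_zero]
  smul_mem' c p hp j := starOp_eq_zero_iff.mpr fun r => by
    rw [smul_eq_mul, mul_comm c, mul_assoc, starOp_eq_zero_iff.mp (hp j)]

theorem perpOfPoly_sum_starOp_eq_starAnnihilator {ι : Type*} [Fintype ι] [DecidableEq ι]
    (qs : ι → MvPolynomial (Fin h) ℂ) :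
    perpOfPoly {q | ∃ a : ι → MvPowerSeries (Fin h) ℂ, q = ∑ j, starOp (a j) (qs j)} =
      starAnnihilator qs := by
  ext p
  refine ⟨fun hp j => ext_pairing_monomial_right fun γ => ?_, ?_⟩
  · rw [pairing_zero_left, pairing_starOp, mul_comm, ← pairing_starOp]
    refine hp _ ⟨Pi.single j (MvPowerSeries.monomial γ 1), ?_⟩
    rw [Finset.sum_eq_single j (fun j' _ hj' => by rw [Pi.single_eq_of_ne hj', starOp_zero_left])
      (by simp), Pi.single_eq_same]
  · rintro hp q ⟨a, rfl⟩
    rw [pairing_sum_left]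
    refine Finset.sum_eq_zero fun j _ => ?_
    rw [pairing_starOp, mul_comm, ← pairing_starOp, hp j, pairing_zero_left]

end StarPairing

/-- if Q is the ℂ[[s]]-module generated (under star) by q₁,…,q_m, then
Q^⊥ = { p | p ⋆ q_j = 0 ∀ j }, Q^⊥ contains every monomial s^α with |α| > max deg q_j,
and Q^⊥ is an Artinian ideal generated by finitely many polynomials. -/
theorem stmt8 (h m : ℕ) (qs : Fin m → MvPolynomial (Fin h) ℂ)
    (Q : Set (MvPolynomial (Fin h) ℂ))
    (hQ : Q = {q | ∃ a : Fin m → MvPowerSeries (Fin h) ℂ, q = ∑ j, starOp (a j) (qs j)}) :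
    perpOfPoly Q = {p : MvPowerSeries (Fin h) ℂ | ∀ j, starOp p (qs j) = 0} ∧
    (∀ α : Fin h →₀ ℕ, (∑ i, α i) > Finset.univ.sup (fun j => (qs j).totalDegree) →
      MvPowerSeries.monomial α (1 : ℂ) ∈ perpOfPoly Q) ∧
    (∃ I : Ideal (MvPowerSeries (Fin h) ℂ),
      (I : Set (MvPowerSeries (Fin h) ℂ)) = perpOfPoly Q ∧
      (∃ (k : ℕ) (g : Fin k → MvPolynomial (Fin h) ℂ),
        I = Ideal.span (Set.range fun i => ((g i : MvPowerSeries (Fin h) ℂ)))) ∧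
      IsArtinianRing (MvPowerSeries (Fin h) ℂ ⧸ I)) := by
  subst hQ
  set d := Finset.univ.sup fun j => (qs j).totalDegree
  have totalDegree_lt (j : Fin m) : (qs j).totalDegree < d + 1 :=
    Nat.lt_succ_of_le (Finset.le_sup (f := fun j => (qs j).totalDegree) (Finset.mem_univ j))
  have mem_of_le_order (p : MvPowerSeries (Fin h) ℂ) (hp : ((d + 1 : ℕ) : ℕ∞) ≤ p.order) :
      p ∈ starAnnihilator qs := fun j =>
    starOp_eq_zero_of_totalDegree_lt_order ((Nat.cast_lt.mpr (totalDegree_lt j)).trans_le hp)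
  have hperp := perpOfPoly_sum_starOp_eq_starAnnihilator qs
  refine ⟨hperp, fun α hα => hperp ▸ mem_of_le_order _ ?_, starAnnihilator qs, hperp.symm, ?_, ?_⟩
  · rw [← Finsupp.degree_eq_sum] at hα
    exact (Nat.cast_le.mpr hα).trans (MvPowerSeries.le_order_monomial α 1)
  · obtain ⟨S, hS, hspan⟩ := MvPowerSeries.exists_finite_span_coe_of_le_order mem_of_le_order
    obtain ⟨k, g, hg⟩ := hS.fin_embedding
    exact ⟨k, g, by rw [hspan, ← hg, ← Set.range_comp]; rfl⟩
  · have := MvPowerSeries.finite_quotient_of_le_order mem_of_le_order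
    exact IsArtinianRing.of_finite ℂ _
end
end

section
/- Let v, v' ∈ ℂ^n with v − v' ∈ ℤ^n, and define p_{v'←v} := Π_{ν=1}^n Π_{μ=1}^{v_ν − v'_ν} (∂_{y_ν} + v_ν − μ + 1) ∈ ℂ[∂_y]_0 (empty products when v'_ν − v_ν ∈ ℕ are 1). Then there exists a unit p̃ in the local ring ℂ[∂_y]_0 such that p_{v'←v} = p̃ · ∂_y^{nsupp(v')∖nsupp(v)}, where nsupp(w) := { ν | w_ν ∈ ℤ_{<0} } and ∂_y^J = Π_{ν∈J}∂_{y_ν}. In particular, p_{v'←v} is a unit of ℂ[∂_y]_0 if and only if nsupp(v') ⊆ nsupp(v). -/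
/-!
Each factor `∂_ν + c` of `p_{v'←v}` has constant term `c`, so it is a unit of the local ring at
the origin unless `c = 0`. In the `ν`-th block the constants `v_ν - μ` are pairwise distinct, so
at most one of them vanishes, and one does exactly when `v_ν` is a natural number below
`v_ν - v'_ν`, i.e. when `ν ∈ nsupp(v') ∖ nsupp(v)`. A squarefree monomial is a unit only when it
is `1`.
-/

noncomputable section
open MvPolynomial

instance kerPrime (n : ℕ) :
    (RingHom.ker (constantCoeff : MvPolynomial (Fin n) ℂ →+* ℂ)).IsPrime :=
  RingHom.ker_isPrime _

/-- the local ring ℂ[∂_y]₀. -/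
abbrev LocPoly (n : ℕ) :=
  Localization.AtPrime (RingHom.ker (constantCoeff : MvPolynomial (Fin n) ℂ →+* ℂ))

/-- the squarefree monomial ∂_y^J. -/
def sqMono {n : ℕ} (J : Finset (Fin n)) : MvPolynomial (Fin n) ℂ := ∏ ν ∈ J, X ν

open Classical in
/-- negative support: nsupp(w) = { ν | w_ν ∈ ℤ_{<0} }. -/
def nsuppF {n : ℕ} (w : Fin n → ℂ) : Finset (Fin n) :=
  Finset.univ.filter (fun ν => ∃ z : ℤ, z < 0 ∧ w ν = z)

/-- the operator p_{v'←v} = ∏_ν ∏_{μ=1}^{v_ν−v'_ν} (∂_{y_ν} + v_ν − μ + 1),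
written with μ reindexed by μ−1 ∈ range((v_ν−v'_ν)⁺); empty products (when
v'_ν − v_ν ∈ ℕ, i.e. u_ν ≤ 0) are 1. -/
def pOp {n : ℕ} (v : Fin n → ℂ) (u : Fin n → ℤ) : MvPolynomial (Fin n) ℂ :=
  ∏ ν, ∏ μ ∈ Finset.range (u ν).toNat, (X ν + C (v ν - μ))

namespace MvPolynomial

variable (σ K : Type*) [Field K]

instance isPrime_ker_constantCoeff :
    (RingHom.ker (constantCoeff : MvPolynomial σ K →+* K)).IsPrime :=
  RingHom.ker_isPrime _

abbrev LocalizationAtOrigin :=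
  Localization.AtPrime (RingHom.ker (constantCoeff : MvPolynomial σ K →+* K))

variable {σ K}

theorem isUnit_algebraMap_localizationAtOrigin_iff (p : MvPolynomial σ K) :
    IsUnit (algebraMap (MvPolynomial σ K) (LocalizationAtOrigin σ K) p) ↔
      constantCoeff p ≠ 0 := by
  rw [IsLocalization.AtPrime.isUnit_to_map_iff _ (RingHom.ker constantCoeff)]
  simp [Ideal.primeCompl, RingHom.mem_ker]

theorem isUnit_algebraMap_prod_X_iff (J : Finset σ) :
    IsUnit (algebraMap (MvPolynomial σ K) (LocalizationAtOrigin σ K) (∏ ν ∈ J, X ν)) ↔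
      J = ∅ := by
  rw [isUnit_algebraMap_localizationAtOrigin_iff]
  simp [map_prod]

theorem isUnit_algebraMap_prod_X_add_C (ν : σ) {c : K} {s : Finset ℕ}
    (hc : ∀ μ ∈ s, c ≠ μ) :
    IsUnit (algebraMap (MvPolynomial σ K) (LocalizationAtOrigin σ K)
      (∏ μ ∈ s, (X ν + C (c - μ)))) := by
  rw [isUnit_algebraMap_localizationAtOrigin_iff]
  simpa [map_prod, Finset.prod_ne_zero_iff, sub_eq_zero] using hc

theorem exists_unit_mul_X_eq_prod_range [CharZero K] (ν : σ) {m N : ℕ} (hm : m < N) :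
    ∃ w : (LocalizationAtOrigin σ K)ˣ,
      algebraMap (MvPolynomial σ K) (LocalizationAtOrigin σ K)
          (∏ μ ∈ Finset.range N, (X ν + C ((m : K) - μ))) =
        w * algebraMap (MvPolynomial σ K) (LocalizationAtOrigin σ K) (X ν) := by
  rw [← Finset.mul_prod_erase _ _ (Finset.mem_range.2 hm), sub_self, C_0, add_zero, map_mul,
    mul_comm]
  have hunit := isUnit_algebraMap_prod_X_add_C ν (c := (m : K)) (s := (Finset.range N).erase m)
    fun μ hμ => by exact_mod_cast (Finset.ne_of_mem_erase hμ).symm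
  exact ⟨hunit.unit, rfl⟩

end MvPolynomial

variable {n : ℕ} {v v' : Fin n → ℂ} {u : Fin n → ℤ}

theorem mem_nsuppF_sdiff_iff (hu : ∀ ν, v ν - v' ν = (u ν : ℂ)) (ν : Fin n) :
    ν ∈ nsuppF v' \ nsuppF v ↔ ∃ m < (u ν).toNat, v ν = m := by
  have hv' : v' ν = v ν - u ν := by rw [← hu ν]; ring
  simp only [Finset.mem_sdiff, nsuppF, Finset.mem_filter, Finset.mem_univ, true_and]
  constructor
  · rintro ⟨⟨z, hz, hz'⟩, hnv⟩
    have hv : v ν = ((z + u ν : ℤ) : ℂ) := by push_cast; rw [← hz', hv']; ring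
    have hnn : 0 ≤ z + u ν := by
      by_contra h
      exact hnv ⟨z + u ν, by omega, hv⟩
    exact ⟨(z + u ν).toNat, by omega, by rw [hv]; norm_cast; omega⟩
  · rintro ⟨m, hm, hv⟩
    refine ⟨⟨m - u ν, by omega, by rw [hv', hv]; push_cast; ring⟩, ?_⟩
    rintro ⟨z, hz, hz'⟩
    rw [hv] at hz'
    have : (m : ℤ) = z := by exact_mod_cast hz'
    omega

theorem exists_unit_mul_ite_eq_prod_range (hu : ∀ ν, v ν - v' ν = (u ν : ℂ)) (ν : Fin n) :
    ∃ w : (LocPoly n)ˣ,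
      algebraMap (MvPolynomial (Fin n) ℂ) (LocPoly n)
          (∏ μ ∈ Finset.range (u ν).toNat, (X ν + C (v ν - μ))) =
        w * algebraMap (MvPolynomial (Fin n) ℂ) (LocPoly n)
          (if ν ∈ nsuppF v' \ nsuppF v then X ν else 1) := by
  split_ifs with hν
  · obtain ⟨m, hm, hv⟩ := (mem_nsuppF_sdiff_iff hu ν).1 hν
    rw [hv]
    exact exists_unit_mul_X_eq_prod_range ν hm
  · have hunit := isUnit_algebraMap_prod_X_add_C ν (c := v ν)
      (s := Finset.range (u ν).toNat) fun μ hμ hvμ =>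
        hν ((mem_nsuppF_sdiff_iff hu ν).2 ⟨μ, Finset.mem_range.1 hμ, hvμ⟩)
    exact ⟨hunit.unit, by rw [map_one, mul_one, IsUnit.unit_spec]⟩

theorem exists_unit_mul_sqMono_eq_pOp (hu : ∀ ν, v ν - v' ν = (u ν : ℂ)) :
    ∃ w : (LocPoly n)ˣ,
      algebraMap (MvPolynomial (Fin n) ℂ) (LocPoly n) (pOp v u) =
        w * algebraMap (MvPolynomial (Fin n) ℂ) (LocPoly n) (sqMono (nsuppF v' \ nsuppF v)) := by
  choose w hw using exists_unit_mul_ite_eq_prod_range hu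
  refine ⟨∏ ν, w ν, ?_⟩
  rw [pOp, sqMono, ← Finset.univ_inter (nsuppF v' \ nsuppF v), ← Finset.prod_ite_mem,
    map_prod, map_prod, Units.coe_prod, ← Finset.prod_mul_distrib]
  exact Finset.prod_congr rfl fun ν _ => hw ν

/-- p_{v'←v} = (unit) · ∂^(nsupp(v')∖nsupp(v)) in ℂ[∂_y]₀, and
p_{v'←v} is a unit iff nsupp(v') ⊆ nsupp(v). -/
theorem stmt17 (n : ℕ) (v v' : Fin n → ℂ) (u : Fin n → ℤ)
    (hu : ∀ ν, v ν - v' ν = (u ν : ℂ)) :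
    (∃ ptil : (LocPoly n)ˣ,
      algebraMap (MvPolynomial (Fin n) ℂ) (LocPoly n) (pOp v u) =
        (ptil : LocPoly n) *
          algebraMap (MvPolynomial (Fin n) ℂ) (LocPoly n) (sqMono (nsuppF v' \ nsuppF v))) ∧
    (IsUnit (algebraMap (MvPolynomial (Fin n) ℂ) (LocPoly n) (pOp v u)) ↔
      nsuppF v' ⊆ nsuppF v) := by
  obtain ⟨w, hw⟩ := exists_unit_mul_sqMono_eq_pOp hu
  refine ⟨⟨w, hw⟩, ?_⟩
  rw [hw, Units.isUnit_units_mul, sqMono, isUnit_algebraMap_prod_X_iff,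
    Finset.sdiff_eq_empty_iff_subset]
end
end

section
/- Let v, v' ∈ ℂ^n with u := v' − v ∈ ℤ^n, and let r ∈ ℂ[y_1,...,y_n]. Then ∂_x^{u_−} • (r(log x) · x^v) = (p_{v'←v} • r)(log x) · x^{v − u_−}, where u_± ∈ ℕ^n are the positive and negative parts of u, p_{v'←v} := Π_{ν=1}^n Π_{μ=1}^{v_ν − v'_ν}(∂_{y_ν} + v_ν − μ + 1), and the operator acts on r in the y-variables before substituting y = log x. -/
noncomputable section
open MvPolynomial

/-- partial derivative of a function of n real variables in direction ν. -/
def pd {n : ℕ} (ν : Fin n) (f : (Fin n → ℝ) → ℂ) : (Fin n → ℝ) → ℂ :=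
  fun x => deriv (fun t : ℝ => f (Function.update x ν t)) (x ν)

/-- iterated partial derivative ∂_x^k = ∏_ν ∂_{x_ν}^{k_ν}. -/
def pdIter {n : ℕ} (k : Fin n → ℕ) (f : (Fin n → ℝ) → ℂ) : (Fin n → ℝ) → ℂ :=
  (List.finRange n).foldr (fun ν g => (pd ν)^[k ν] g) f

/-- iterated pderiv ∂_y^β on polynomials. -/
def pderivM {n : ℕ} (β : Fin n →₀ ℕ) (r : MvPolynomial (Fin n) ℂ) : MvPolynomial (Fin n) ℂ :=
  (List.finRange n).foldr (fun ν t => (fun s => MvPolynomial.pderiv ν s)^[β ν] t) r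

/-- action of a constant-coefficient operator q(∂_y) on a polynomial r(y). -/
def opPoly {n : ℕ} (q r : MvPolynomial (Fin n) ℂ) : MvPolynomial (Fin n) ℂ :=
  ∑ β ∈ q.support, q.coeff β • pderivM β r

/-- the function r(log x)·x^v on the positive orthant. -/
def logFun {n : ℕ} (r : MvPolynomial (Fin n) ℂ) (v : Fin n → ℂ) : (Fin n → ℝ) → ℂ :=
  fun x => MvPolynomial.eval (fun ν => (Real.log (x ν) : ℂ)) r * ∏ ν, (x ν : ℂ) ^ (v ν)

/-! In the variable `t = x_ν` one has `∂_t (r(log x)·x^w) = ((∂_{y_ν} + w_ν) r)(log x)·x^{w - e_ν}`: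
each derivative lowers the exponent by one and applies a linear factor `∂_{y_ν} + c` to the
polynomial. Iterating `k_ν` times in each direction produces the factors of `p_{v'←v}`. Because
partial derivatives of polynomials commute, `q ↦ q(∂_y)` is an algebra homomorphism, so the
product of the factors acts as their composition. The formulas hold only on the positive
orthant, so they are stated as germs at `x` (`=ᶠ[𝓝 x]`), which is what makes them iterable. -/

namespace MvPolynomial

variable {R σ : Type*} [CommRing R]

theorem pderiv_pderiv_comm (i j : σ) (p : MvPolynomial σ R) :
    pderiv i (pderiv j p) = pderiv j (pderiv i p) := by
  have h : ⁅pderiv i, pderiv j⁆ = (0 : Derivation R (MvPolynomial σ R) (MvPolynomial σ R)) :=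
    derivation_ext fun k => by
      classical
      rw [Derivation.commutator_apply, pderiv_X, pderiv_X]
      simp only [Pi.single_apply]
      split_ifs <;> simp
  rw [← sub_eq_zero, ← Derivation.commutator_apply, h, Derivation.zero_apply]

variable (R σ) in
abbrev pderivAlgebra : Subalgebra R (Module.End R (MvPolynomial σ R)) :=
  Algebra.adjoin R (Set.range fun i => (pderiv i).toLinearMap)

instance : IsMulCommutative (pderivAlgebra R σ) :=
  Algebra.isMulCommutative_adjoin R <| by
    rintro _ ⟨i, rfl⟩ _ ⟨j, rfl⟩
    exact LinearMap.ext fun p => pderiv_pderiv_comm i j p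

open scoped IsMulCommutative in
/-- `q ↦ q(∂)`, the constant-coefficient differential operator with symbol `q`; it is well defined
because the partial derivatives commute. -/
def toDiffOp : MvPolynomial σ R →ₐ[R] Module.End R (MvPolynomial σ R) :=
  (pderivAlgebra R σ).val.comp
    (aeval fun i => ⟨(pderiv i).toLinearMap, Algebra.subset_adjoin ⟨i, rfl⟩⟩)

@[simp]
theorem toDiffOp_X (i : σ) : toDiffOp (X i) = (pderiv i).toLinearMap (A := MvPolynomial σ R) := by
  simp [toDiffOp]

theorem toDiffOp_X_add_C_apply (i : σ) (a : R) (p : MvPolynomial σ R) :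
    toDiffOp (X i + C a) p = pderiv i p + a • p := by
  simp [← algebraMap_eq]

theorem foldr_iterate_pderiv (l : List σ) (β : σ → ℕ) (p : MvPolynomial σ R) :
    l.foldr (fun i q => (fun s => pderiv i s)^[β i] q) p
      = toDiffOp ((l.map fun i => X i ^ β i).prod) p := by
  induction l with
  | nil => simp
  | cons i l ih => simp [ih, Module.End.pow_apply]

end MvPolynomial

theorem opPoly_eq_toDiffOp {n : ℕ} (q r : MvPolynomial (Fin n) ℂ) :
    opPoly q r = toDiffOp q r := by
  have hmon (β : Fin n →₀ ℕ) : pderivM β r = toDiffOp (monomial β 1) r := by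
    rw [pderivM, foldr_iterate_pderiv, ← Fin.prod_univ_def, monomial_eq, C_1, one_mul,
      Finsupp.prod_fintype _ _ fun _ => pow_zero _]
  conv_rhs => rw [q.as_sum]
  rw [opPoly, map_sum, LinearMap.sum_apply]
  refine Finset.sum_congr rfl fun β _ => ?_
  rw [hmon, ← LinearMap.smul_apply, ← map_smul, smul_monomial, smul_eq_mul, mul_one]

theorem MvPolynomial.hasDerivAt_eval_update {𝕜 σ : Type*} [NontriviallyNormedField 𝕜]
    [DecidableEq σ] (p : MvPolynomial σ 𝕜) (y : σ → 𝕜) (i : σ) (s : 𝕜) :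
    HasDerivAt (fun t => eval (Function.update y i t) p)
      (eval (Function.update y i s) (pderiv i p)) s := by
  induction p using MvPolynomial.induction_on with
  | C a => simpa using hasDerivAt_const s a
  | add p q hp hq =>
    simp only [map_add]
    exact hp.add hq
  | mul_X p j hp =>
    simp only [map_mul, eval_X, pderiv_mul, map_add]
    rcases eq_or_ne j i with rfl | hji
    · simp only [Function.update_self, pderiv_X_self, map_one]
      exact hp.mul (hasDerivAt_id' s)
    · simp only [Function.update_of_ne hji, pderiv_X_of_ne hji, map_zero, mul_zero, add_zero]
      exact hp.mul_const (y j)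

open Filter Topology

section PartialDerivative

variable {n : ℕ} {f g : (Fin n → ℝ) → ℂ} {x : Fin n → ℝ}

theorem pd_eq_of_eventuallyEq (h : f =ᶠ[𝓝 x] g) (ν : Fin n) : pd ν f x = pd ν g x := by
  have hc : Continuous fun t : ℝ => Function.update x ν t :=
    continuous_const.update ν continuous_id
  have ht : Tendsto (fun t : ℝ => Function.update x ν t) (𝓝 (x ν)) (𝓝 x) := by
    simpa using hc.tendsto (x ν)
  exact EventuallyEq.deriv_eq (ht.eventually h)

theorem Filter.EventuallyEq.pd (h : f =ᶠ[𝓝 x] g) (ν : Fin n) :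
    _root_.pd ν f =ᶠ[𝓝 x] _root_.pd ν g :=
  h.eventuallyEq_nhds.mono fun _ hy => pd_eq_of_eventuallyEq hy ν

theorem Filter.EventuallyEq.iterate_pd (h : f =ᶠ[𝓝 x] g) (ν : Fin n) (k : ℕ) :
    (_root_.pd ν)^[k] f =ᶠ[𝓝 x] (_root_.pd ν)^[k] g := by
  induction k with
  | zero => exact h
  | succ k ih => simpa only [Function.iterate_succ_apply'] using ih.pd ν

end PartialDerivative

section LogFun

variable {n : ℕ}

theorem logFun_update (r : MvPolynomial (Fin n) ℂ) (w : Fin n → ℂ) (x : Fin n → ℝ) (ν : Fin n)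
    (t : ℝ) (a : ℂ) :
    logFun r (Function.update w ν a) (Function.update x ν t) =
      eval (Function.update (fun μ => (Real.log (x μ) : ℂ)) ν (Real.log t)) r *
        ((t : ℂ) ^ a * ∏ μ ∈ Finset.univ \ {ν}, (x μ : ℂ) ^ w μ) := by
  have hlog : (fun μ => (Real.log (Function.update x ν t μ) : ℂ))
      = Function.update (fun μ => (Real.log (x μ) : ℂ)) ν (Real.log t) :=
    _root_.funext fun μ => Function.apply_update (fun _ s => (Real.log s : ℂ)) x ν t μ
  have hpow : (fun μ => (Function.update x ν t μ : ℂ) ^ Function.update w ν a μ)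
      = Function.update (fun μ => (x μ : ℂ) ^ w μ) ν ((t : ℂ) ^ a) :=
    _root_.funext fun μ =>
      Function.apply_update₂ (fun _ (s : ℝ) (b : ℂ) => (s : ℂ) ^ b) x w ν t a μ
  simp only [logFun, hlog, hpow, Finset.prod_update_of_mem (Finset.mem_univ ν)]

theorem hasDerivAt_logFun_update (r : MvPolynomial (Fin n) ℂ) (w : Fin n → ℂ) {x : Fin n → ℝ}
    {ν : Fin n} (hx : 0 < x ν) :
    HasDerivAt (fun t => logFun r w (Function.update x ν t))
      (logFun (pderiv ν r + w ν • r) (Function.update w ν (w ν - 1)) x) (x ν) := by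
  set y : Fin n → ℂ := fun μ => (Real.log (x μ) : ℂ)
  set K := ∏ μ ∈ Finset.univ \ {ν}, (x μ : ℂ) ^ w μ
  have hlog : HasDerivAt (fun t : ℝ => (Real.log t : ℂ)) ((x ν)⁻¹ : ℝ) (x ν) :=
    (Real.hasDerivAt_log hx.ne').ofReal_comp
  have heval : HasDerivAt (fun t : ℝ => eval (Function.update y ν (Real.log t)) r)
      (eval y (pderiv ν r) * ((x ν)⁻¹ : ℝ)) (x ν) := by
    refine ((hasDerivAt_eval_update r y ν (Real.log (x ν))).comp (x ν) hlog).congr_deriv ?_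
    simp [y]
  have hpow : HasDerivAt (fun t : ℝ => (t : ℂ) ^ w ν) (w ν * (x ν : ℂ) ^ (w ν - 1)) (x ν) := by
    simpa using
      ((hasDerivAt_id (x ν : ℂ)).cpow_const (Complex.ofReal_mem_slitPlane.2 hx)).comp_ofReal
  have hval (q : MvPolynomial (Fin n) ℂ) (a : ℂ) :
      logFun q (Function.update w ν a) x = eval y q * ((x ν : ℂ) ^ a * K) := by
    simpa [y] using logFun_update q w x ν (x ν) a
  have hfun : (fun t => logFun r w (Function.update x ν t))
      = fun t : ℝ => eval (Function.update y ν (Real.log t)) r * ((t : ℂ) ^ w ν * K) :=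
    funext fun t => by simpa using logFun_update r w x ν t (w ν)
  rw [hfun]
  refine (heval.mul (hpow.mul_const K)).congr_deriv ?_
  have hx' : (x ν : ℂ) ≠ 0 := Complex.ofReal_ne_zero.2 hx.ne'
  rw [hval, Complex.cpow_sub _ _ hx', Complex.cpow_one]
  simp [y]
  field_simp

theorem pd_logFun_eventuallyEq (r : MvPolynomial (Fin n) ℂ) (w : Fin n → ℂ) {x : Fin n → ℝ}
    {ν : Fin n} (hx : 0 < x ν) :
    pd ν (logFun r w) =ᶠ[𝓝 x]
      logFun (toDiffOp (X ν + C (w ν)) r) (Function.update w ν (w ν - 1)) := by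
  filter_upwards [((continuous_apply ν).tendsto x).eventually (lt_mem_nhds hx)] with y hy
  rw [toDiffOp_X_add_C_apply]
  exact (hasDerivAt_logFun_update r w hy).deriv

theorem iterate_pd_logFun_eventuallyEq (r : MvPolynomial (Fin n) ℂ) (w : Fin n → ℂ)
    {x : Fin n → ℝ} {ν : Fin n} (hx : 0 < x ν) (k : ℕ) :
    (pd ν)^[k] (logFun r w) =ᶠ[𝓝 x]
      logFun (toDiffOp (∏ μ ∈ Finset.range k, (X ν + C (w ν - μ))) r)
        (Function.update w ν (w ν - k)) := by
  induction k with
  | zero => simp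
  | succ k ih =>
    rw [Function.iterate_succ_apply']
    refine (ih.pd ν).trans ((pd_logFun_eventuallyEq _ _ hx).trans (.of_eq ?_))
    simp [Finset.prod_range_succ, mul_comm, sub_sub]

theorem foldr_iterate_pd_logFun_eventuallyEq (r : MvPolynomial (Fin n) ℂ) (v : Fin n → ℂ)
    (k : Fin n → ℕ) {x : Fin n → ℝ} (hx : ∀ ν, 0 < x ν) :
    ∀ l : List (Fin n), l.Nodup →
      l.foldr (fun ν f => (pd ν)^[k ν] f) (logFun r v) =ᶠ[𝓝 x]
        logFun (toDiffOp ((l.map fun ν => ∏ μ ∈ Finset.range (k ν), (X ν + C (v ν - μ))).prod) r)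
          (fun μ => v μ - if μ ∈ l then (k μ : ℂ) else 0)
  | [], _ => by simp
  | ν :: l, hl => by
    rw [List.nodup_cons] at hl
    refine ((foldr_iterate_pd_logFun_eventuallyEq r v k hx l hl.2).iterate_pd ν (k ν)).trans
      ((iterate_pd_logFun_eventuallyEq _ _ (hx ν) _).trans (.of_eq ?_))
    congr 1
    · simp [hl.1]
    · funext μ
      by_cases hμ : μ = ν
      · subst hμ; simp [hl.1]
      · simp [hμ]

end LogFun

theorem stmt18_general (n : ℕ) (v : Fin n → ℂ) (u : Fin n → ℤ)
    (r : MvPolynomial (Fin n) ℂ)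
    (x : Fin n → ℝ) (hx : ∀ ν, 0 < x ν) :
    pdIter (fun ν => (u ν).toNat) (logFun r v) x =
      logFun (opPoly (pOp v u) r) (fun ν => v ν - ((u ν).toNat : ℂ)) x := by
  have h := (foldr_iterate_pd_logFun_eventuallyEq r v (fun ν => (u ν).toNat) hx _
    (List.nodup_finRange n)).eq_of_nhds
  simpa [pdIter, pOp, Fin.prod_univ_def, opPoly_eq_toDiffOp] using h

/-- ∂_x^{u₋} • (r(log x)·x^v) = (p_{v'←v} • r)(log x)·x^{v−u₋}, where
v' = v − u and u₋ is the negative part of u ∈ ℤⁿ. -/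
theorem stmt18 (n : ℕ) (v v' : Fin n → ℂ) (u : Fin n → ℤ)
    (hv' : ∀ ν, v' ν = v ν - (u ν : ℂ)) (r : MvPolynomial (Fin n) ℂ)
    (x : Fin n → ℝ) (hx : ∀ ν, 0 < x ν) :
    pdIter (fun ν => (u ν).toNat) (logFun r v) x =
      logFun (opPoly (pOp v u) r) (fun ν => v ν - ((u ν).toNat : ℂ)) x :=
  stmt18_general n v u r x hx
end
end
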